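/- For all r ∈ [0,1) and θ ∈ ℝ: (1 + r² - 2r·cos θ)^{-1/2} = ∑_{n=0}^{∞} ( ∑_{q=0}^{n} F̃_{q,n} · cos((n - 2q)·θ) ) · r^n, the outer series converging absolutely. -/

import Mathlib

noncomputable section

/-- the Legendre polynomial P_n(ξ) = ∑_{k=0}^{⌊n/2⌋} p_{n,k} ξ^{n-2k} -/
def legP (n : ℕ) (ξ : ℝ) : ℝ :=
  ∑ k ∈ Finset.range (n / 2 + 1),
    ((-1 : ℝ) ^ k / 2 ^ n) * (Nat.factorial (2 * n - 2 * k) : ℝ) /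
      ((Nat.factorial k : ℝ) * (Nat.factorial (n - k) : ℝ) * (Nat.factorial (n - 2 * k) : ℝ)) *
      ξ ^ (n - 2 * k)

/-- F̃_{q,n} = (2q)!(2n-2q)! / (2^{2n} (q!)² ((n-q)!)²) -/
def Ftil (q n : ℕ) : ℝ :=
  ((Nat.factorial (2 * q) : ℝ) * (Nat.factorial (2 * n - 2 * q) : ℝ)) /
    (2 ^ (2 * n) * (Nat.factorial q : ℝ) ^ 2 * (Nat.factorial (n - q) : ℝ) ^ 2)

/-!
With `z = r e^{iθ}` one has `1 + r² - 2 r cos θ = |1 - z|² = (1 - z)(1 - z̄)`, and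
`(1 - w)^{-1/2} = ∑ C(2n, n) / 4ⁿ wⁿ` for `|w| < 1` (the binomial series at exponent `-1/2`).
The Cauchy product of these series at `w = z` and `w = z̄` converges absolutely to `|1 - z|⁻¹`, and
since `F̃_{q,n} = C(2q, q) C(2n - 2q, n - q) / 4ⁿ`, the real part of its `n`-th term is
`∑_q F̃_{q,n} cos((n - 2q) θ) rⁿ`.
-/

open Nat Finset Complex ComplexConjugate

theorem ascPochhammer_eval_inv_two {K : Type*} [Field K] [CharZero K] (n : ℕ) :
    (ascPochhammer K n).eval (2⁻¹ : K) = n ! * n.centralBinom / 4 ^ n := by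
  induction n with
  | zero => simp
  | succ n ih =>
    have h : ((n + 1 : ℕ) : K) * (n + 1).centralBinom = 2 * (2 * n + 1) * n.centralBinom := by
      exact_mod_cast Nat.succ_mul_centralBinom_succ n
    rw [ascPochhammer_succ_eval, ih, Nat.factorial_succ]
    push_cast at h ⊢
    field_simp
    linear_combination (-2 : K) * 4 ^ n * n ! * h

theorem Ring.choose_inv_two_add_sub_one {K : Type*} [Field K] [CharZero K] (n : ℕ) :
    Ring.choose ((2⁻¹ : K) + n - 1) n = n.centralBinom / 4 ^ n := by
  have h := Ring.factorial_nsmul_multichoose_eq_ascPochhammer (2⁻¹ : K) n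
  rw [Polynomial.ascPochhammer_smeval_eq_eval, ascPochhammer_eval_inv_two, Ring.multichoose_eq,
    nsmul_eq_mul, mul_div_assoc] at h
  exact mul_left_cancel₀ (by exact_mod_cast n.factorial_ne_zero) h

theorem Complex.hasSum_centralBinom_div_four_pow_mul_pow {z : ℂ} (hz : ‖z‖ < 1) :
    HasSum (fun n ↦ (n.centralBinom / 4 ^ n : ℂ) * z ^ n) (1 / (1 - z) ^ (2⁻¹ : ℂ)) := by
  have := (one_div_one_sub_cpow_hasFPowerSeriesOnBall_zero (2⁻¹ : ℂ)).hasSum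
    (y := z) (by rwa [Metric.mem_eball, edist_zero_right, ← ofReal_norm, ENNReal.ofReal_lt_one])
  simpa [FormalMultilinearSeries.ofScalars_apply_eq, Ring.choose_inv_two_add_sub_one, mul_comm]
    using this

theorem Complex.cpow_inv_two_mul_conj_cpow_inv_two {x : ℂ} (hx : x.arg ≠ Real.pi) :
    x ^ (2⁻¹ : ℂ) * conj x ^ (2⁻¹ : ℂ) = ‖x‖ := by
  rw [conj_cpow _ _ hx, map_inv₀, map_ofNat, mul_conj, normSq_eq_norm_sq,
    show (2⁻¹ : ℂ) = ((2⁻¹ : ℝ) : ℂ) by push_cast; rfl, norm_cpow_real]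
  congr 1
  simpa using Real.rpow_inv_natCast_pow (norm_nonneg x) (n := 2) two_ne_zero

theorem Nat.cast_centralBinom_eq_factorial_div {K : Type*} [Field K] [CharZero K] (n : ℕ) :
    (n.centralBinom : K) = (2 * n)! / (n ! ^ 2) := by
  rw [Nat.centralBinom_eq_two_mul_choose, Nat.cast_choose K (by omega), two_mul,
    Nat.add_sub_cancel, sq]

theorem Ftil_eq_mul {q n : ℕ} (h : q ≤ n) :
    Ftil q n = q.centralBinom / 4 ^ q * ((n - q).centralBinom / 4 ^ (n - q)) := by
  have hpow : (2 : ℝ) ^ (2 * n) = 4 ^ q * 4 ^ (n - q) := by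
    rw [← pow_add, Nat.add_sub_cancel' h, pow_mul]; norm_num
  rw [Ftil, Nat.cast_centralBinom_eq_factorial_div, Nat.cast_centralBinom_eq_factorial_div,
    show 2 * n - 2 * q = 2 * (n - q) by omega, hpow]
  ring

theorem Complex.summable_norm_centralBinom_div_four_pow_mul_pow {z : ℂ} (hz : ‖z‖ < 1) :
    Summable (fun n ↦ ‖(n.centralBinom / 4 ^ n : ℂ) * z ^ n‖) := by
  refine .of_nonneg_of_le (fun _ ↦ norm_nonneg _) (fun n ↦ ?_)
    (summable_geometric_of_lt_one (norm_nonneg z) hz)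
  have hc : (n.centralBinom : ℝ) / 4 ^ n ≤ 1 :=
    div_le_one_of_le₀ (by exact_mod_cast n.centralBinom_le_four_pow) (by positivity)
  rw [norm_mul, norm_pow, norm_div, norm_pow, Complex.norm_natCast, Complex.norm_ofNat]
  exact mul_le_of_le_one_left (by positivity) hc

theorem Complex.norm_one_sub_ofReal_mul_exp (r θ : ℝ) :
    ‖1 - r * exp (θ * I)‖ = √(1 + r ^ 2 - 2 * r * Real.cos θ) := by
  rw [norm_def, normSq_apply]
  congr 1
  simp only [sub_re, sub_im, one_re, one_im, re_ofReal_mul, im_ofReal_mul, exp_ofReal_mul_I_re,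
    exp_ofReal_mul_I_im]
  linear_combination r ^ 2 * Real.sin_sq_add_cos_sq θ

theorem Complex.re_ofReal_mul_exp_pow_mul_conj_pow (r θ : ℝ) (k m : ℕ) :
    ((r * exp (θ * I)) ^ k * conj (r * exp (θ * I)) ^ m).re
      = r ^ (k + m) * Real.cos ((k - m : ℝ) * θ) := by
  have hconj : conj (r * exp (θ * I)) = r * exp ((-θ : ℝ) * I) := by
    rw [map_mul, conj_ofReal, ← exp_conj, map_mul, conj_ofReal, conj_I]; push_cast; ring_nf
  have hexp : (k : ℂ) * (θ * I) + m * ((-θ : ℝ) * I) = ((k - m : ℝ) * θ : ℝ) * I := by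
    push_cast; ring
  rw [hconj, mul_pow, mul_pow, ← exp_nat_mul, ← exp_nat_mul, mul_mul_mul_comm, ← pow_add,
    ← exp_add, ← ofReal_pow, hexp, re_ofReal_mul, exp_ofReal_mul_I_re]

theorem Complex.hasSum_centralBinom_cauchyProduct_conj {z : ℂ} (hz : ‖z‖ < 1) :
    HasSum (fun n ↦ ∑ k ∈ range (n + 1), (k.centralBinom / 4 ^ k : ℂ) * z ^ k *
      ((n - k).centralBinom / 4 ^ (n - k) * conj z ^ (n - k))) (‖1 - z‖⁻¹ : ℝ) := by
  have hz' : ‖conj z‖ < 1 := by rwa [RCLike.norm_conj]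
  have harg : (1 - z).arg ≠ Real.pi := by
    refine slitPlane_arg_ne_pi ?_
    simpa [sub_eq_add_neg] using mem_slitPlane_of_norm_lt_one (z := -z) (by simpa)
  have hprod : 1 / (1 - z) ^ (2⁻¹ : ℂ) * (1 / (1 - conj z) ^ (2⁻¹ : ℂ)) = (‖1 - z‖⁻¹ : ℝ) := by
    rw [one_div_mul_one_div, ← map_one (starRingEnd ℂ), ← map_sub, map_one,
      cpow_inv_two_mul_conj_cpow_inv_two harg, one_div, ofReal_inv]
  rw [← hprod, ← (hasSum_centralBinom_div_four_pow_mul_pow hz).tsum_eq,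
    ← (hasSum_centralBinom_div_four_pow_mul_pow hz').tsum_eq]
  exact hasSum_sum_range_mul_of_summable_norm
    (f := fun k ↦ (k.centralBinom / 4 ^ k : ℂ) * z ^ k)
    (g := fun k ↦ (k.centralBinom / 4 ^ k : ℂ) * conj z ^ k)
    (summable_norm_centralBinom_div_four_pow_mul_pow hz)
    (summable_norm_centralBinom_div_four_pow_mul_pow hz')

theorem Complex.summable_norm_centralBinom_cauchyProduct_conj {z : ℂ} (hz : ‖z‖ < 1) :
    Summable (fun n ↦ ‖∑ k ∈ range (n + 1), (k.centralBinom / 4 ^ k : ℂ) * z ^ k *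
      ((n - k).centralBinom / 4 ^ (n - k) * conj z ^ (n - k))‖) := by
  have hz' : ‖conj z‖ < 1 := by rwa [RCLike.norm_conj]
  exact summable_norm_sum_mul_range_of_summable_norm
    (f := fun k ↦ (k.centralBinom / 4 ^ k : ℂ) * z ^ k)
    (g := fun k ↦ (k.centralBinom / 4 ^ k : ℂ) * conj z ^ k)
    (summable_norm_centralBinom_div_four_pow_mul_pow hz)
    (summable_norm_centralBinom_div_four_pow_mul_pow hz')

theorem Complex.re_centralBinom_cauchyProduct_conj_ofReal_mul_exp (r θ : ℝ) (n : ℕ) :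
    (∑ k ∈ range (n + 1), (k.centralBinom / 4 ^ k : ℂ) * (r * exp (θ * I)) ^ k *
      ((n - k).centralBinom / 4 ^ (n - k) * conj (r * exp (θ * I)) ^ (n - k))).re
      = (∑ q ∈ range (n + 1), Ftil q n * Real.cos (((n : ℝ) - 2 * q) * θ)) * r ^ n := by
  rw [re_sum, sum_mul]
  refine sum_congr rfl fun k hk ↦ ?_
  have hkn : k ≤ n := Nat.lt_succ_iff.mp (mem_range.mp hk)
  have hcoeff : (k.centralBinom / 4 ^ k : ℂ) * ((n - k).centralBinom / 4 ^ (n - k))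
      = (Ftil k n : ℝ) := by
    rw [Ftil_eq_mul hkn]; push_cast; ring
  rw [mul_mul_mul_comm, hcoeff, re_ofReal_mul, re_ofReal_mul_exp_pow_mul_conj_pow,
    Nat.add_sub_cancel' hkn, Nat.cast_sub hkn, ← Real.cos_neg]
  ring_nf

/-- (1 + r² - 2r cos θ)^{-1/2}
= ∑_{n=0}^∞ (∑_{q=0}^n F̃_{q,n} cos((n-2q)θ)) r^n for r ∈ [0,1). -/
theorem generating_function_trig_expansion (r : ℝ) (hr : r ∈ Set.Ico (0:ℝ) 1) (θ : ℝ) :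
    Summable (fun n : ℕ =>
      |(∑ q ∈ Finset.range (n + 1), Ftil q n * Real.cos (((n : ℝ) - 2 * q) * θ)) * r ^ n|) ∧
    (Real.sqrt (1 + r ^ 2 - 2 * r * Real.cos θ))⁻¹ =
      ∑' n : ℕ,
        (∑ q ∈ Finset.range (n + 1), Ftil q n * Real.cos (((n : ℝ) - 2 * q) * θ)) * r ^ n := by
  have hz : ‖(r : ℂ) * exp (θ * I)‖ < 1 := by
    simpa [norm_exp_ofReal_mul_I, abs_of_nonneg hr.1] using hr.2
  simp_rw [← re_centralBinom_cauchyProduct_conj_ofReal_mul_exp]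
  refine ⟨.of_nonneg_of_le (fun _ ↦ abs_nonneg _) (fun _ ↦ abs_re_le_norm _)
    (summable_norm_centralBinom_cauchyProduct_conj hz), ?_⟩
  rw [← norm_one_sub_ofReal_mul_exp]
  exact (hasSum_re (hasSum_centralBinom_cauchyProduct_conj hz)).tsum_eq.symm

end
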